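/- Let H be an m×m Hankel matrix, r < m, and H̃ the associated (2m-r-1)×(r+1) rectangular Hankel matrix. Then for a point x, rank H(x) ≤ p if and only if rank H̃(x) ≤ p, for every p ≤ r. In particular rank H(x) = p iff rank H̃(x) = p. -/

import Mathlib

/-!
If a Hankel matrix with `a + 1` rows and `n` columns has a nonzero kernel `V`, then padding the
vectors of `V` by a zero at the end, or at the beginning, gives kernel vectors of the Hankel
matrix with `a` rows and `n + 1` columns built from the same sequence. The two padded copies of
`V` together span a space of dimension `> dim V`: if the last nonzero coordinate of `V` sits at
index `t`, the front-padded copy has a vector with a nonzero coordinate at `t + 1`. Hence moving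
a row to a column does not increase the rank as long as the rank stays below the number of
columns, and iterating this (and its transpose) shows that `H(x)` and `H̃(x)` have equal rank as
soon as one of them has rank at most `r`.
-/

open Matrix Module

namespace Matrix

theorem rank_add_finrank_ker_mulVecLin {K m n : Type*} [Field K] [Fintype n]
    (A : Matrix m n K) : A.rank + finrank K (LinearMap.ker A.mulVecLin) = Fintype.card n := by
  rw [rank, LinearMap.finrank_range_add_finrank_ker, Module.finrank_fintype_fun_eq_card]

def hankel {α : Type*} (h : ℕ → α) (a b : ℕ) : Matrix (Fin a) (Fin b) α :=
  of fun i j => h (i + j)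

@[simp] theorem hankel_apply {α : Type*} (h : ℕ → α) (a b : ℕ) (i : Fin a) (j : Fin b) :
    hankel h a b i j = h (i + j) := rfl

theorem transpose_hankel {α : Type*} (h : ℕ → α) (a b : ℕ) :
    (hankel h a b)ᵀ = hankel h b a := by
  ext i j
  simp [Nat.add_comm]

theorem rank_hankel_congr {R : Type*} [CommSemiring R] (h : ℕ → R) {a a' b b' : ℕ}
    (ha : a = a') (hb : b = b') : (hankel h a b).rank = (hankel h a' b').rank := by
  subst ha hb; rfl

theorem rank_hankel_comm {K : Type*} [Field K] (h : ℕ → K) (a b : ℕ) :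
    (hankel h a b).rank = (hankel h b a).rank := by
  rw [← transpose_hankel, rank_transpose]

end Matrix

section Padding

variable (R : Type*) [Semiring R] (n : ℕ)

def padLast : (Fin n → R) →ₗ[R] (Fin (n + 1) → R) :=
  LinearMap.pi (Fin.snoc (fun i => LinearMap.proj i) 0)

def padFirst : (Fin n → R) →ₗ[R] (Fin (n + 1) → R) :=
  LinearMap.pi (Fin.cons 0 (fun i => LinearMap.proj i))

variable {R n}

@[simp] theorem padLast_castSucc (v : Fin n → R) (i : Fin n) :
    padLast R n v i.castSucc = v i := by
  simp [padLast]

@[simp] theorem padLast_last (v : Fin n → R) : padLast R n v (Fin.last n) = 0 := by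
  simp [padLast]

@[simp] theorem padFirst_zero (v : Fin n → R) : padFirst R n v 0 = 0 := by
  simp [padFirst]

@[simp] theorem padFirst_succ (v : Fin n → R) (i : Fin n) : padFirst R n v i.succ = v i := by
  simp [padFirst]

theorem padLast_injective : Function.Injective (padLast R n) := fun u v huv =>
  funext fun i => by simpa using congrFun huv i.castSucc

theorem padLast_apply_eq_zero_of_lt {v : Fin n → R} {t : Fin n} (hv : ∀ j, t < j → v j = 0)
    {j : Fin (n + 1)} (hj : t.castSucc < j) : padLast R n v j = 0 := by
  induction j using Fin.lastCases with
  | last => exact padLast_last v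
  | cast j => rw [padLast_castSucc]; exact hv j (Fin.castSucc_lt_castSucc_iff.mp hj)

end Padding

theorem Submodule.exists_apply_ne_zero_forall_gt_eq_zero {R ι : Type*} [Semiring R]
    [Fintype ι] [LinearOrder ι] (V : Submodule R (ι → R)) (hV : V ≠ ⊥) :
    ∃ v ∈ V, ∃ t, v t ≠ 0 ∧ ∀ u ∈ V, ∀ j, t < j → u j = 0 := by
  classical
  obtain ⟨v, hvV, hv⟩ := Submodule.exists_mem_ne_zero_of_ne_bot hV
  obtain ⟨i, hi⟩ := Function.ne_iff.mp hv
  obtain ⟨t, ht, hmax⟩ := Finset.exists_max_image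
    (Finset.univ.filter fun j => ∃ v ∈ V, v j ≠ 0) id ⟨i, by simpa using ⟨v, hvV, hi⟩⟩
  obtain ⟨w, hwV, hw⟩ := (Finset.mem_filter.mp ht).2
  refine ⟨w, hwV, t, hw, fun u hu j htj => ?_⟩
  by_contra huj
  exact (htj.trans_le (hmax j (by simpa using ⟨u, hu, huj⟩))).false

theorem finrank_lt_finrank_map_padLast_sup_map_padFirst {K : Type*} [Field K] {n : ℕ}
    (V : Submodule K (Fin n → K)) (hV : V ≠ ⊥) :
    finrank K V < finrank K ↥(V.map (padLast K n) ⊔ V.map (padFirst K n)) := by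
  obtain ⟨v, hvV, t, hvt, hmax⟩ := V.exists_apply_ne_zero_forall_gt_eq_zero hV
  have hnotmem : padFirst K n v ∉ V.map (padLast K n) := by
    rintro ⟨u, huV, hu⟩
    have := congrFun hu t.succ
    rw [padFirst_succ, padLast_apply_eq_zero_of_lt (hmax u huV) Fin.castSucc_lt_succ] at this
    exact hvt this.symm
  calc finrank K V = finrank K (V.map (padLast K n)) :=
        (Submodule.equivMapOfInjective _ padLast_injective V).finrank_eq
    _ < _ := Submodule.finrank_lt_finrank_of_lt <| lt_of_le_of_ne le_sup_left fun hEq =>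
        hnotmem (hEq ▸ Submodule.mem_sup_right (Submodule.mem_map_of_mem hvV))

namespace Matrix

section Kernel

variable {R : Type*} [CommSemiring R] (h : ℕ → R) {a n : ℕ}

theorem hankel_mulVec_padLast (v : Fin n → R) (i : Fin a) :
    (hankel h a (n + 1) *ᵥ padLast R n v) i = (hankel h (a + 1) n *ᵥ v) i.castSucc := by
  simp [mulVec, dotProduct, Fin.sum_univ_castSucc]

theorem hankel_mulVec_padFirst (v : Fin n → R) (i : Fin a) :
    (hankel h a (n + 1) *ᵥ padFirst R n v) i = (hankel h (a + 1) n *ᵥ v) i.succ := by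
  simp [mulVec, dotProduct, Fin.sum_univ_succ, Nat.add_right_comm, Nat.add_assoc]

theorem map_padLast_ker_hankel_le :
    (LinearMap.ker (hankel h (a + 1) n).mulVecLin).map (padLast R n) ≤
      LinearMap.ker (hankel h a (n + 1)).mulVecLin := by
  rintro _ ⟨v, hv, rfl⟩
  ext i
  simpa [hankel_mulVec_padLast] using congrFun hv i.castSucc

theorem map_padFirst_ker_hankel_le :
    (LinearMap.ker (hankel h (a + 1) n).mulVecLin).map (padFirst R n) ≤
      LinearMap.ker (hankel h a (n + 1)).mulVecLin := by
  rintro _ ⟨v, hv, rfl⟩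
  ext i
  simpa [hankel_mulVec_padFirst] using congrFun hv i.succ

end Kernel

variable {K : Type*} [Field K] (h : ℕ → K)

theorem rank_hankel_succ_right_le {a n : ℕ} (hA : (hankel h (a + 1) n).rank < n) :
    (hankel h a (n + 1)).rank ≤ (hankel h (a + 1) n).rank := by
  have hrkA := rank_add_finrank_ker_mulVecLin (hankel h (a + 1) n)
  have hrkB := rank_add_finrank_ker_mulVecLin (hankel h a (n + 1))
  simp only [Fintype.card_fin] at hrkA hrkB
  set V := LinearMap.ker (hankel h (a + 1) n).mulVecLin
  have hV : V ≠ ⊥ := fun hV => by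
    rw [hV, finrank_bot] at hrkA
    omega
  have hker := (finrank_lt_finrank_map_padLast_sup_map_padFirst V hV).trans_le <|
    Submodule.finrank_mono <| sup_le (map_padLast_ker_hankel_le h) (map_padFirst_ker_hankel_le h)
  omega

theorem rank_hankel_add_right_le (a n d : ℕ) (hA : (hankel h (a + d) n).rank < n) :
    (hankel h a (n + d)).rank ≤ (hankel h (a + d) n).rank := by
  induction d generalizing n with
  | zero => rfl
  | succ d ih =>
    have hstep := rank_hankel_succ_right_le h (a := a + d) hA
    rw [rank_hankel_congr h rfl (by omega : n + (d + 1) = n + 1 + d)]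
    exact (ih (n + 1) (hstep.trans_lt (hA.trans (Nat.lt_succ_self n)))).trans hstep

theorem rank_hankel_add_left_le (a n d : ℕ) (hB : (hankel h a (n + d)).rank < a) :
    (hankel h (a + d) n).rank ≤ (hankel h a (n + d)).rank := by
  rw [rank_hankel_comm, rank_hankel_comm h a]
  exact rank_hankel_add_right_le h n a d (by rwa [rank_hankel_comm])

end Matrix

theorem rank_hankel_iff_rank_rect_hankel_general (m r : ℕ) (hr : r < m)
    (hv : ℕ → ℂ)
    (H : Matrix (Fin m) (Fin m) ℂ) (hH : ∀ i j, H i j = hv (i.1 + j.1))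
    (tH : Matrix (Fin (2 * m - r - 1)) (Fin (r + 1)) ℂ)
    (htH : ∀ i j, tH i j = hv (i.1 + j.1)) :
    ∀ p ≤ r, (H.rank ≤ p ↔ tH.rank ≤ p) ∧ (H.rank = p ↔ tH.rank = p) := by
  obtain rfl : H = hankel hv m m := Matrix.ext hH
  obtain rfl : tH = hankel hv (2 * m - r - 1) (r + 1) := Matrix.ext htH
  set d := m - (r + 1)
  have hHrank : (hankel hv m m).rank = (hankel hv m (r + 1 + d)).rank :=
    rank_hankel_congr hv rfl (by omega)
  have htHrank : (hankel hv (2 * m - r - 1) (r + 1)).rank = (hankel hv (m + d) (r + 1)).rank :=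
    rank_hankel_congr hv (by omega) rfl
  have hle := rank_hankel_add_right_le hv m (r + 1) d
  have hge := rank_hankel_add_left_le hv m (r + 1) d
  rw [hHrank, htHrank]
  intro p hp
  omega

/-- Let `H(x)` be an `n`-variate linear Hankel matrix of size `m`
(entries are the affine-linear forms `hv k (x) = a k 0 + ∑ ℓ x ℓ * a k (ℓ+1)` evaluated
at a point `x`, arranged with constant skew diagonals), `r < m`, and `H̃(x)` the associated
`(2m - r - 1) × (r + 1)` rectangular Hankel matrix with the same entries.  Then for every
`p ≤ r`, `rank H(x) ≤ p` if and only if `rank H̃(x) ≤ p`; in particular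
`rank H(x) = p` iff `rank H̃(x) = p`. -/
theorem rank_hankel_iff_rank_rect_hankel (m n r : ℕ) (hr : r < m)
    (a : ℕ → Fin (n + 1) → ℂ) (x : Fin n → ℂ)
    (hv : ℕ → ℂ) (hhv : ∀ k, hv k = a k 0 + ∑ ℓ : Fin n, x ℓ * a k ℓ.succ)
    (H : Matrix (Fin m) (Fin m) ℂ) (hH : ∀ i j, H i j = hv (i.1 + j.1))
    (tH : Matrix (Fin (2 * m - r - 1)) (Fin (r + 1)) ℂ)
    (htH : ∀ i j, tH i j = hv (i.1 + j.1)) :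
    ∀ p ≤ r, (H.rank ≤ p ↔ tH.rank ≤ p) ∧ (H.rank = p ↔ tH.rank = p) :=
  rank_hankel_iff_rank_rect_hankel_general m r hr hv H hH tH htH
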